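/- arXiv:1012.2186 — 3 statements merged into one kernel-verified Lean document; each statement's English description precedes it below -/
import Mathlib

section
/- Let K be an infinite field, n ≥ 1, and 1 ≤ m ≤ d with m ≥ 2n. Then for a general homogeneous F ∈ K[x₀,…,xₙ] of degree d (i.e., for all F in a nonempty Zariski-open subset of the space of degree-d forms), there is no pair (p, L) of a point p ∈ Pⁿ and a line L ∋ p such that L meets the hypersurface {F=0} at p with multiplicity ≥ m. -/
/-!
Fix a chart `(i, j)`, `i ≠ j`, and normalize a point `[a]` and a line through it, with direction
`b`, so that `a i = 1`, `b i = 0`, `b j = 1`. The linear change of coordinates sending `x_i, x_j`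
to the coordinates along `a, b` turns `F` into a form `G` whose restriction to the `x_i x_j`-line
is `F` restricted to the line, so contact of order `≥ m` means that the `m` coefficients of
`x_i ^ (d - k) * x_j ^ k`, `k < m`, of `G` vanish. Hence every such `F` is obtained from a free
choice of `n` entries of `a`, `n - 1` entries of `b` and the remaining `N - m` coefficients of `G`,
where `N` is the number of monomials of degree `d`. As `2 n - 1 + N - m < N`, the `N` coefficients
of this polynomial parametrization are algebraically dependent (transcendence degree), and the
product over all charts of the resulting relations is the required `P`.
-/

theorem AlgebraicIndependent.natCard_le {K : Type*} [CommRing K] [IsDomain K] {ι τ : Type*}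
    [Finite τ] {ψ : ι → MvPolynomial τ K} (h : AlgebraicIndependent K ψ) :
    Nat.card ι ≤ Nat.card τ := by
  have hcard := h.lift_cardinalMk_le_trdeg
  rw [MvPolynomial.trdeg_of_isDomain, Cardinal.lift_lift, Cardinal.lift_mk_le] at hcard
  obtain ⟨e⟩ := hcard
  exact Nat.card_le_card_of_injective e e.injective

namespace MvPolynomial

section CommSemiring

variable {R σ : Type*} [CommSemiring R]

theorem X_pow_dvd_iff {p : MvPolynomial σ R} {i : σ} {m : ℕ} :
    X i ^ m ∣ p ↔ ∀ s : σ →₀ ℕ, s i < m → p.coeff s = 0 := by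
  classical
  have not_le_iff (s : σ →₀ ℕ) : ¬ Finsupp.single i m ≤ s ↔ s i < m := by
    rw [Finsupp.single_le_iff, not_le]
  rw [X_pow_eq_monomial, monomial_one_dvd_iff_modMonomial_eq_zero]
  refine ⟨fun h s hs => ?_, fun h => ?_⟩
  · rw [← coeff_modMonomial_of_not_le p ((not_le_iff s).2 hs), h, coeff_zero]
  · ext s
    by_cases hs : Finsupp.single i m ≤ s
    · rw [coeff_modMonomial_of_le _ hs, coeff_zero]
    · rw [coeff_modMonomial_of_not_le _ hs, coeff_zero, h s ((not_le_iff s).1 hs)]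

theorem sum_monomial_coeff_of_support_subset {G : MvPolynomial σ R} {s : Finset (σ →₀ ℕ)}
    (h : G.support ⊆ s) : ∑ γ ∈ s, monomial γ (G.coeff γ) = G := by
  conv_rhs => rw [G.as_sum]
  exact (Finset.sum_subset h fun γ _ hγ => by rw [notMem_support_iff.1 hγ, monomial_zero]).symm

noncomputable def restrictPlane (F : MvPolynomial σ R) (a b : σ → R) : MvPolynomial (Fin 2) R :=
  aeval (fun k => C (a k) * X 0 + C (b k) * X 1) F

theorem IsHomogeneous.restrictPlane {F : MvPolynomial σ R} {d : ℕ} (hF : F.IsHomogeneous d)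
    (a b : σ → R) : (F.restrictPlane a b).IsHomogeneous d := by
  have h := hF.aeval (S := R) (τ := Fin 2) (fun k => C (a k) * X 0 + C (b k) * X 1)
    fun k => (isHomogeneous_C_mul_X (a k) 0).add (isHomogeneous_C_mul_X (b k) 1)
  rwa [one_mul] at h

theorem aeval_restrictPlane (F : MvPolynomial σ R) (a b : σ → R) :
    aeval ![1, Polynomial.X] (F.restrictPlane a b) =
      aeval (fun k => Polynomial.C (a k) + Polynomial.C (b k) * Polynomial.X) F := by
  rw [restrictPlane, comp_aeval_apply]
  congr
  funext k
  simp [Polynomial.algebraMap_eq]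

theorem restrictPlane_smul_smul_add_smul (F : MvPolynomial σ R) (a b : σ → R) (u v w : R) :
    F.restrictPlane (u • a) (v • a + w • b) =
      aeval ![C u * X 0 + C v * X 1, C w * X 1] (F.restrictPlane a b) := by
  rw [restrictPlane, restrictPlane, comp_aeval_apply]
  congr
  funext k
  simp only [Pi.add_apply, Pi.smul_apply, smul_eq_mul, map_add, map_mul, aeval_C, aeval_X,
    algebraMap_eq, Matrix.cons_val_zero, Matrix.cons_val_one, Matrix.cons_val_fin_one]
  ring

theorem IsHomogeneous.degree_eq_of_coeff_ne_zero {φ : MvPolynomial σ R} {n : ℕ}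
    (hφ : φ.IsHomogeneous n) {s : σ →₀ ℕ} (hs : φ.coeff s ≠ 0) : s.degree = n :=
  by_contra fun h => hs (hφ.coeff_eq_zero h)

theorem coeff_aeval_one_X_of_isHomogeneous {g : MvPolynomial (Fin 2) R} {d : ℕ}
    (hg : g.IsHomogeneous d) {s : Fin 2 →₀ ℕ} (hs : s.degree = d) :
    (aeval ![1, Polynomial.X] g).coeff (s 1) = g.coeff s := by
  have hdegree (t : Fin 2 →₀ ℕ) : t.degree = t 0 + t 1 := by
    rw [Finsupp.degree_eq_sum, Fin.sum_univ_two]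
  have hsum : aeval ![1, Polynomial.X] g =
      ∑ t ∈ g.support, Polynomial.C (g.coeff t) * Polynomial.X ^ t 1 := by
    conv_lhs => rw [g.as_sum]
    rw [map_sum]
    refine Finset.sum_congr rfl fun t _ => ?_
    rw [aeval_monomial, Finsupp.prod_fintype _ _ (fun _ => pow_zero _), Fin.prod_univ_two]
    simp [Polynomial.algebraMap_eq]
  rw [hsum, Polynomial.finsetSum_coeff]
  simp_rw [Polynomial.coeff_C_mul_X_pow]
  rw [Finset.sum_eq_single s (fun t ht hts => if_neg fun h1 => hts ?_) (fun hs => ?_), if_pos rfl]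
  · have ht := hg.degree_eq_of_coeff_ne_zero (mem_support_iff.1 ht)
    rw [hdegree] at hs ht
    exact Finsupp.ext (Fin.forall_fin_two.2 ⟨by omega, h1.symm⟩)
  · rw [if_pos rfl, notMem_support_iff.1 hs]

theorem X_one_pow_dvd_of_isHomogeneous {g : MvPolynomial (Fin 2) R} {d m : ℕ}
    (hg : g.IsHomogeneous d) (h : (Polynomial.X : Polynomial R) ^ m ∣ aeval ![1, Polynomial.X] g) :
    X 1 ^ m ∣ g := by
  rw [X_pow_dvd_iff]
  intro s hs
  by_contra hne
  rw [← coeff_aeval_one_X_of_isHomogeneous hg (hg.degree_eq_of_coeff_ne_zero hne)] at hne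
  exact hne (Polynomial.X_pow_dvd_iff.1 h _ hs)

theorem X_one_pow_dvd_restrictPlane {F : MvPolynomial σ R} {d m : ℕ} (hF : F.IsHomogeneous d)
    {a b : σ → R}
    (h : (Polynomial.X : Polynomial R) ^ m ∣
      aeval (fun k => Polynomial.C (a k) + Polynomial.C (b k) * Polynomial.X) F) :
    X 1 ^ m ∣ F.restrictPlane a b :=
  X_one_pow_dvd_of_isHomogeneous (hF.restrictPlane a b) (by rwa [aeval_restrictPlane])

theorem X_one_pow_dvd_restrictPlane_smul_smul_add_smul {F : MvPolynomial σ R} {a b : σ → R}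
    {m : ℕ} (h : X 1 ^ m ∣ F.restrictPlane a b) (u v w : R) :
    X 1 ^ m ∣ F.restrictPlane (u • a) (v • a + w • b) := by
  rw [restrictPlane_smul_smul_add_smul]
  refine dvd_trans ?_ (map_dvd (aeval _) h)
  simp [mul_pow]

end CommSemiring

theorem exists_ne_zero_forall_eval_coeff_map_eval_eq_zero {K σ ι τ : Type*} [CommRing K]
    [IsDomain K] [Finite τ] (Φ : MvPolynomial σ (MvPolynomial τ K)) (e : ι → σ →₀ ℕ)
    (h : Nat.card τ < Nat.card ι) :
    ∃ P : MvPolynomial ι K, P ≠ 0 ∧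
      ∀ v : τ → K, eval (fun s => (map (eval v) Φ).coeff (e s)) P = 0 := by
  have hdep : ¬ AlgebraicIndependent K fun s => Φ.coeff (e s) := fun hind =>
    (hind.natCard_le.trans_lt h).false
  rw [algebraicIndependent_iff] at hdep
  push Not at hdep
  obtain ⟨P, hP, hP0⟩ := hdep
  refine ⟨P, hP0, fun v => ?_⟩
  calc eval (fun s => (map (eval v) Φ).coeff (e s)) P
      = aeval v (aeval (fun s => Φ.coeff (e s)) P) := by
        simp only [coeff_map, comp_aeval_apply, aeval_eq_eval]
    _ = 0 := by rw [hP, map_zero]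

section Chart

variable {R σ : Type*} [CommRing R] [DecidableEq σ] (i j : σ)

noncomputable def chartSubst (a b : σ → R) (k : σ) : MvPolynomial σ R :=
  C (a k) * X i + C (b k) * X j + if k = i ∨ k = j then 0 else X k

noncomputable def chartSubstInv (a b : σ → R) (k : σ) : MvPolynomial σ R :=
  if k = i then X i
  else if k = j then X j - C (a j) * X i
  else X k - C (a k - a j * b k) * X i - C (b k) * X j

variable {i j}

theorem isHomogeneous_chartSubst (a b : σ → R) (k : σ) :
    (chartSubst i j a b k).IsHomogeneous 1 :=
  ((isHomogeneous_C_mul_X _ _).add (isHomogeneous_C_mul_X _ _)).add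
    (by split_ifs; exacts [isHomogeneous_zero _ _ _, isHomogeneous_X _ _])

theorem aeval_chartSubstInv_aeval_chartSubst (hij : i ≠ j) {a b : σ → R} (ha : a i = 1)
    (hbi : b i = 0) (hbj : b j = 1) (F : MvPolynomial σ R) :
    aeval (chartSubstInv i j a b) (aeval (chartSubst i j a b) F) = F := by
  rw [comp_aeval_apply]
  conv_rhs => rw [← aeval_X_left_apply F]
  congr
  funext k
  by_cases hki : k = i
  · subst hki
    simp [chartSubst, chartSubstInv, hij, ha, hbi]
  by_cases hkj : k = j
  · subst hkj
    simp [chartSubst, chartSubstInv, hki, hbj]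
  simp only [chartSubst, chartSubstInv, hki, hkj, Ne.symm hij, or_self, ↓reduceIte, map_add,
    map_mul, aeval_C, aeval_X, algebraMap_eq, C_sub]
  ring

theorem map_chartSubstInv {S : Type*} [CommRing S] (f : R →+* S) (a b : σ → R) (k : σ) :
    map f (chartSubstInv i j a b k) = chartSubstInv i j (f ∘ a) (f ∘ b) k := by
  unfold chartSubstInv
  split_ifs <;> simp

theorem killCompl_aeval_chartSubst (hij : i ≠ j) (a b : σ → R) (F : MvPolynomial σ R) :
    killCompl (injective_pair_iff_ne.2 hij) (aeval (chartSubst i j a b) F) =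
      F.restrictPlane a b := by
  have hf := injective_pair_iff_ne.2 hij
  have hXi : killCompl hf (X i : MvPolynomial σ R) = X 0 := by
    simpa using killCompl_rename_app hf (X 0 : MvPolynomial (Fin 2) R)
  have hXj : killCompl hf (X j : MvPolynomial σ R) = X 1 := by
    simpa using killCompl_rename_app hf (X 1 : MvPolynomial (Fin 2) R)
  have hX (k : σ) (hk : ¬(k = i ∨ k = j)) : killCompl hf (X k : MvPolynomial σ R) = 0 := by
    rw [killCompl, aeval_X, dif_neg]
    rintro ⟨l, rfl⟩
    fin_cases l <;> simp at hk
  rw [comp_aeval_apply, restrictPlane]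
  congr
  funext k
  by_cases hk : k = i ∨ k = j
  · simp [chartSubst, hk, hXi, hXj]
  · simp [chartSubst, hk, hXi, hXj, hX k hk]

theorem coeff_aeval_chartSubst_eq_zero (hij : i ≠ j) {a b : σ → R} {F : MvPolynomial σ R}
    {m : ℕ} (h : X 1 ^ m ∣ F.restrictPlane a b) (d : ℕ) {k : ℕ} (hk : k < m) :
    (aeval (chartSubst i j a b) F).coeff (Finsupp.single i (d - k) + Finsupp.single j k) = 0 := by
  have hmap : Finsupp.single i (d - k) + Finsupp.single j k =
      (Finsupp.single (0 : Fin 2) (d - k) + Finsupp.single 1 k).mapDomain ![i, j] := by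
    rw [Finsupp.mapDomain_add, Finsupp.mapDomain_single, Finsupp.mapDomain_single]
    rfl
  rw [hmap, ← coeff_killCompl (injective_pair_iff_ne.2 hij), killCompl_aeval_chartSubst hij]
  exact X_pow_dvd_iff.1 h _ (by simpa using hk)

variable (i j) in
noncomputable def chartBadMonomials (d m : ℕ) : Finset (σ →₀ ℕ) :=
  (Finset.range m).image fun k => Finsupp.single i (d - k) + Finsupp.single j k

theorem card_chartBadMonomials (hij : i ≠ j) (d m : ℕ) :
    (chartBadMonomials i j d m).card = m := by
  rw [chartBadMonomials, Finset.card_image_of_injective _ fun k l hkl => ?_, Finset.card_range]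
  simpa [hij] using congrArg (· j) hkl

variable [Fintype σ]

theorem chartBadMonomials_subset {d m : ℕ} (hmd : m ≤ d + 1) :
    chartBadMonomials i j d m ⊆ Finset.univ.finsuppAntidiag d := by
  intro s hs
  obtain ⟨k, hk, rfl⟩ := Finset.mem_image.1 hs
  rw [Finset.mem_range] at hk
  refine Finset.mem_finsuppAntidiag.2 ⟨?_, Finset.subset_univ _⟩
  rw [← Finsupp.degree_eq_sum, map_add, Finsupp.degree_single, Finsupp.degree_single]
  omega

variable (i j) in
noncomputable def chartGoodMonomials (d m : ℕ) : Finset (σ →₀ ℕ) :=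
  Finset.univ.finsuppAntidiag d \ chartBadMonomials i j d m

theorem support_aeval_chartSubst_subset (hij : i ≠ j) {a b : σ → R} {F : MvPolynomial σ R}
    {d m : ℕ} (hF : F.IsHomogeneous d) (h : X 1 ^ m ∣ F.restrictPlane a b) :
    (aeval (chartSubst i j a b) F).support ⊆ chartGoodMonomials i j d m := by
  have hG : (aeval (chartSubst i j a b) F).IsHomogeneous d := by
    simpa only [one_mul] using hF.aeval (S := R) _ (isHomogeneous_chartSubst a b)
  intro s hs
  rw [mem_support_iff] at hs
  simp only [chartGoodMonomials, chartBadMonomials, Finset.mem_sdiff, Finset.mem_finsuppAntidiag,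
    Finset.mem_image, Finset.mem_range, not_exists, not_and]
  refine ⟨⟨?_, Finset.subset_univ _⟩,
    fun k hk hks => hs (hks ▸ coeff_aeval_chartSubst_eq_zero hij h d hk)⟩
  rw [← Finsupp.degree_eq_sum]
  exact hG.degree_eq_of_coeff_ne_zero hs

variable (i j) in
/-- The free parameters of the chart: `a k` for `k ≠ i`, `b k` for `k ∉ {i, j}`, and one
coefficient for each good monomial. -/
abbrev ChartParam (d m : ℕ) : Type _ :=
  ({i}ᶜ : Finset σ) ⊕ ({i, j}ᶜ : Finset σ) ⊕ chartGoodMonomials i j d m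

theorem natCard_chartParam_lt (hij : i ≠ j) {d m : ℕ} (hm : 2 * (Fintype.card σ - 1) ≤ m)
    (hmd : m ≤ d + 1) :
    Nat.card (ChartParam i j d m) < Nat.card {s : σ →₀ ℕ // s.sum (fun _ e => e) = d} := by
  have hmonomials : Nat.card {s : σ →₀ ℕ // s.sum (fun _ e => e) = d} =
      ((Finset.univ : Finset σ).finsuppAntidiag d).card := by
    rw [← Nat.card_eq_finsetCard]
    exact Nat.card_congr (Equiv.subtypeEquivRight fun s => by
      simp [Finset.mem_finsuppAntidiag, Finsupp.sum_fintype])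
  have hbad := Finset.card_le_card (chartBadMonomials_subset (i := i) (j := j) hmd)
  have hσ : 2 ≤ Fintype.card σ := (Finset.card_pair hij).symm.le.trans (Finset.card_le_univ _)
  rw [card_chartBadMonomials hij] at hbad
  rw [Nat.card_sum, Nat.card_sum, Nat.card_eq_finsetCard, Nat.card_eq_finsetCard,
    Nat.card_eq_finsetCard, hmonomials, chartGoodMonomials,
    Finset.card_sdiff_of_subset (chartBadMonomials_subset hmd), card_chartBadMonomials hij,
    Finset.card_compl, Finset.card_compl, Finset.card_singleton, Finset.card_pair hij]
  omega

variable (R i j) in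
noncomputable def genericChartForm (d m : ℕ) :
    MvPolynomial σ (MvPolynomial (ChartParam i j d m) R) :=
  aeval (chartSubstInv i j
      (fun k => if h : k = i then 1 else X (Sum.inl ⟨k, by simpa using h⟩))
      (fun k => if h : k ∈ ({i, j} : Finset σ) then (if k = j then 1 else 0)
        else X (Sum.inr (Sum.inl ⟨k, Finset.mem_compl.2 h⟩))))
    (∑ γ : chartGoodMonomials i j d m, monomial (γ : σ →₀ ℕ)
      (X (Sum.inr (Sum.inr γ)) : MvPolynomial (ChartParam i j d m) R))

noncomputable def chartPoint {d m : ℕ} (a b : σ → R) (G : MvPolynomial σ R) :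
    ChartParam i j d m → R :=
  Sum.elim (fun k => a k) (Sum.elim (fun k => b k) fun γ => G.coeff γ)

theorem map_eval_chartPoint_genericChartForm (hij : i ≠ j) {d m : ℕ} {a b : σ → R}
    (ha : a i = 1) (hbi : b i = 0) (hbj : b j = 1) (G : MvPolynomial σ R) :
    map (eval (chartPoint (d := d) (m := m) a b G)) (genericChartForm R i j d m) =
      aeval (chartSubstInv i j a b)
        (∑ γ ∈ chartGoodMonomials i j d m, monomial γ (G.coeff γ)) := by
  rw [genericChartForm, aeval_def, algebraMap_eq, map_eval₂, aeval_def, algebraMap_eq]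
  congr 1
  · funext k
    rw [Function.comp_apply, map_chartSubstInv]
    congr 1 <;> funext l
    · by_cases hl : l = i
      · subst hl; simp [ha]
      · simp [hl, chartPoint]
    · by_cases hl : l ∈ ({i, j} : Finset σ)
      · rcases (by simpa using hl : l = i ∨ l = j) with rfl | rfl
        · simp [hbi, hij]
        · simp [hbj]
      · rw [Function.comp_apply, dif_neg hl]
        simp [chartPoint]
  · rw [map_sum]
    simp only [map_monomial, eval_X, chartPoint, Sum.elim_inr]
    exact Finset.sum_coe_sort _ fun γ => monomial γ (G.coeff γ)

theorem exists_ne_zero_eval_coeff_eq_zero_of_chart [IsDomain R] (hij : i ≠ j) {d m : ℕ}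
    (hm : 2 * (Fintype.card σ - 1) ≤ m) (hmd : m ≤ d + 1) :
    ∃ P : MvPolynomial {s : σ →₀ ℕ // s.sum (fun _ e => e) = d} R, P ≠ 0 ∧
      ∀ F : MvPolynomial σ R, F.IsHomogeneous d →
        ∀ a b : σ → R, a i = 1 → b i = 0 → b j = 1 →
          X 1 ^ m ∣ F.restrictPlane a b → eval (fun s => F.coeff s.1) P = 0 := by
  obtain ⟨P, hP0, hP⟩ := exists_ne_zero_forall_eval_coeff_map_eval_eq_zero
    (genericChartForm R i j d m) Subtype.val (natCard_chartParam_lt hij hm hmd)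
  refine ⟨P, hP0, fun F hF a b ha hbi hbj h => ?_⟩
  have hF_eq : map (eval (chartPoint a b (aeval (chartSubst i j a b) F)))
      (genericChartForm R i j d m) = F := by
    rw [map_eval_chartPoint_genericChartForm hij ha hbi hbj,
      sum_monomial_coeff_of_support_subset (support_aeval_chartSubst_subset hij hF h),
      aeval_chartSubstInv_aeval_chartSubst hij ha hbi hbj]
  have hPF := hP (chartPoint a b (aeval (chartSubst i j a b) F))
  rwa [hF_eq] at hPF

end Chart

end MvPolynomial

theorem exists_chart_of_linearIndependent {K σ : Type*} [Field K] {a b : σ → K}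
    (h : LinearIndependent K ![a, b]) :
    ∃ i j, i ≠ j ∧ ∃ u v w : K,
      (u • a) i = 1 ∧ (v • a + w • b) i = 0 ∧ (v • a + w • b) j = 1 := by
  rw [LinearIndependent.pair_iff] at h
  obtain ⟨i, hai⟩ : ∃ i, a i ≠ 0 := by
    by_contra! ha
    simpa using h 1 0 (funext fun k => by simp [ha k])
  set c := b i / a i
  obtain ⟨j, hj⟩ : ∃ j, b j - c * a j ≠ 0 := by
    by_contra! hb
    simpa using h (-c) 1 (funext fun k => by
      simp only [neg_smul, one_smul, Pi.add_apply, Pi.neg_apply, Pi.smul_apply, smul_eq_mul,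
        Pi.zero_apply]
      linear_combination hb k)
  have hci : b i - c * a i = 0 := by simp [c, hai]
  refine ⟨i, j, fun hij => hj (hij ▸ hci), (a i)⁻¹, -c / (b j - c * a j),
    1 / (b j - c * a j), by simp [hai], ?_, ?_⟩
  · simp only [Pi.add_apply, Pi.smul_apply, smul_eq_mul]
    field_simp
    linear_combination hci
  · simp only [Pi.add_apply, Pi.smul_apply, smul_eq_mul]
    field_simp
    ring

theorem exists_ne_zero_not_exists_contact_line {K σ : Type*} [Field K] [Fintype σ] {d m : ℕ}
    (hm : 2 * (Fintype.card σ - 1) ≤ m) (hmd : m ≤ d + 1) :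
    ∃ P : MvPolynomial {s : σ →₀ ℕ // s.sum (fun _ e => e) = d} K, P ≠ 0 ∧
      ∀ F : MvPolynomial σ K, F.IsHomogeneous d →
        MvPolynomial.eval (fun s => F.coeff s.1) P ≠ 0 →
          ¬ ∃ a b : σ → K, LinearIndependent K ![a, b] ∧
            (Polynomial.X : Polynomial K) ^ m ∣
              MvPolynomial.aeval
                (fun k => Polynomial.C (a k) + Polynomial.C (b k) * Polynomial.X) F := by
  classical
  choose! P hP0 hP using fun i j (hij : i ≠ j) =>
    MvPolynomial.exists_ne_zero_eval_coeff_eq_zero_of_chart (R := K) hij hm hmd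
  refine ⟨∏ p ∈ Finset.univ.offDiag, P p.1 p.2,
    Finset.prod_ne_zero_iff.2 fun p hp => hP0 _ _ (Finset.mem_offDiag.1 hp).2.2, ?_⟩
  rintro F hF hPF ⟨a, b, hab, hdvd⟩
  obtain ⟨i, j, hij, u, v, w, ha, hbi, hbj⟩ := exists_chart_of_linearIndependent hab
  refine hPF ?_
  rw [map_prod]
  refine Finset.prod_eq_zero (i := (i, j)) (by simp [hij]) ?_
  exact hP i j hij F hF _ _ ha hbi hbj
    (MvPolynomial.X_one_pow_dvd_restrictPlane_smul_smul_add_smul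
      (MvPolynomial.X_one_pow_dvd_restrictPlane hF hdvd) u v w)

theorem stmt2_general {K : Type*} [Field K] (n d m : ℕ)
    (hmd : m ≤ d) (h2n : 2 * n ≤ m) :
    ∃ P : MvPolynomial {s : Fin (n + 1) →₀ ℕ // s.sum (fun _ e => e) = d} K,
      P ≠ 0 ∧
        ∀ F : MvPolynomial (Fin (n + 1)) K, F.IsHomogeneous d →
          MvPolynomial.eval (fun s => F.coeff s.1) P ≠ 0 →
            ¬ ∃ a b : Fin (n + 1) → K, LinearIndependent K ![a, b] ∧
                (Polynomial.X : Polynomial K) ^ m ∣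
                  MvPolynomial.aeval
                    (fun i : Fin (n + 1) =>
                      Polynomial.C (a i) + Polynomial.C (b i) * Polynomial.X) F :=
  exists_ne_zero_not_exists_contact_line (by simpa using h2n) (by omega)

/-- Let `K` be an infinite field, `n ≥ 1`, `1 ≤ m ≤ d` with `m ≥ 2n`. Then for
a general homogeneous `F` of degree `d` — i.e. for all `F` in a nonempty Zariski-open subset of
the space of degree-`d` forms, expressed by the nonvanishing of a nonzero polynomial `P` in the
coefficients of `F` (indexed by the degree-`d` monomials) — there is no pair `(p, L)` of a point
`p ∈ Pⁿ` and a line `L ∋ p` (given by `p = [a]` and direction `b`, with `a, b` linearly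
independent) such that `L` meets `{F = 0}` at `p` with multiplicity `≥ m`. -/
theorem stmt2 {K : Type*} [Field K] [Infinite K] (n d m : ℕ)
    (hn : 1 ≤ n) (hm1 : 1 ≤ m) (hmd : m ≤ d) (h2n : 2 * n ≤ m) :
    ∃ P : MvPolynomial {s : Fin (n + 1) →₀ ℕ // s.sum (fun _ e => e) = d} K,
      P ≠ 0 ∧
        ∀ F : MvPolynomial (Fin (n + 1)) K, F.IsHomogeneous d →
          MvPolynomial.eval (fun s => F.coeff s.1) P ≠ 0 →
            ¬ ∃ a b : Fin (n + 1) → K, LinearIndependent K ![a, b] ∧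
                (Polynomial.X : Polynomial K) ^ m ∣
                  MvPolynomial.aeval
                    (fun i : Fin (n + 1) =>
                      Polynomial.C (a i) + Polynomial.C (b i) * Polynomial.X) F :=
  stmt2_general n d m hmd h2n
end

section
/- Let K be a field of characteristic ≠ 3, n ≥ 2, and F ∈ K[x₀,…,xₙ] a cubic form such that the coefficient a₃ of x₁³ is zero, F(1,0,…,0) = 0, the coefficient of x₀²x₁ and of x₀x₁² are zero, and there exist α, β ∈ K with a_{2,j} = α·a_{0,j} + β·a_{1,j} and a_{1,j} = β·a_{0,j} for all 2 ≤ j ≤ n, where a_{k,j} is the coefficient of x₀^{2-k} x₁^k x_j in F. If s ∈ K̄ satisfies s² + βs + (α + β²) = 0, then F(s,1,0,…,0) = 0 and ∂F/∂x_j(s,1,0,…,0) = 0 for all 0 ≤ j ≤ n; in particular the cubic hypersurface {F=0} has a singular point over K̄. -/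
/-! At `p = (s, 1, 0, …, 0)` only the monomials of a form in `x₀, x₁` survive. For `F` these four
cubic coefficients vanish (that of `x₀³` because `F(1, 0, …, 0) = 0`), hence so do `F(p)`, `∂₀F(p)`
and `∂₁F(p)`. For `j ≥ 2`, `∂ⱼF(p) = a_{0,j} s² + a_{1,j} s + a_{2,j}`, which the relations between
the `a_{k,j}` turn into `a_{0,j} (s² + β s + α + β²) = 0`. -/

open MvPolynomial

open Finsupp in
theorem Finsupp.eq_single_add_single_of_support_subset {σ M : Type*} [AddMonoid M] {a b : σ}
    (hab : a ≠ b) {d : σ →₀ M} (hd : ↑d.support ⊆ ({a, b} : Set σ)) :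
    d = single a (d a) + single b (d b) := by
  ext i
  by_cases hia : i = a
  · subst hia; simp [hab]
  by_cases hib : i = b
  · subst hib; simp [hia]
  have : i ∉ d.support := fun hi => (hd hi).elim hia hib
  simp_all

namespace MvPolynomial

open Finset Finsupp

variable {R σ : Type*} [CommSemiring R] {Q : MvPolynomial σ R} {m : ℕ} {a b : σ} {p : σ → R}

theorem IsHomogeneous.eval_eq_sum_of_apply_eq_zero (hQ : Q.IsHomogeneous m) (hab : a ≠ b)
    (hp : ∀ i, i ≠ a → i ≠ b → p i = 0) :
    eval p Q = ∑ k ∈ range (m + 1),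
      coeff (single a k + single b (m - k)) Q * p a ^ k * p b ^ (m - k) := by
  have hterm (k : ℕ) : coeff (single a k + single b (m - k)) Q * p a ^ k * p b ^ (m - k) =
      coeff (single a k + single b (m - k)) Q *
        (single a k + single b (m - k)).prod (fun i k => p i ^ k) := by
    rw [prod_add_index' (fun _ => pow_zero _) (fun _ => pow_add _),
      prod_single_index (h := fun i k => p i ^ k) (pow_zero _),
      prod_single_index (h := fun i k => p i ^ k) (pow_zero _), mul_assoc]
  rw [eval_eq]
  symm
  refine sum_bij_ne_zero (fun k _ _ => single a k + single b (m - k)) ?_ ?_ ?_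
    (fun k _ _ => hterm k)
  · intro k _ hk
    exact mem_support_iff.mpr (left_ne_zero_of_mul (left_ne_zero_of_mul hk))
  · intro k _ _ l _ _ hkl
    simpa [hab] using congrArg (· a) hkl
  · intro d hd hne
    have hd_pair : ↑d.support ⊆ ({a, b} : Set σ) := by
      intro i hi
      by_contra h
      simp only [Set.mem_insert_iff, Set.mem_singleton_iff, not_or] at h
      exact hne (mul_eq_zero_of_right _ (prod_eq_zero hi
        (by rw [hp i h.1 h.2, zero_pow (Finsupp.mem_support_iff.mp hi)])))
    have hd_eq := eq_single_add_single_of_support_subset hab hd_pair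
    have hdeg : d a + d b = m := by
      have := hQ (mem_support_iff.mp hd)
      rw [hd_eq] at this
      simpa [weight_single] using this
    have hk : single a (d a) + single b (m - d a) = d := by
      rw [← hdeg, Nat.add_sub_cancel_left]; exact hd_eq.symm
    exact ⟨d a, mem_range.mpr (by omega), by rw [hterm, hk]; exact hne, hk⟩

theorem IsHomogeneous.eval_pderiv_left_eq_zero (hQ : Q.IsHomogeneous (m + 1)) (hab : a ≠ b)
    (hp : ∀ i, i ≠ a → i ≠ b → p i = 0)
    (hc : ∀ k ≤ m + 1, coeff (single a k + single b (m + 1 - k)) Q = 0) :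
    eval p (pderiv a Q) = 0 := by
  rw [hQ.pderiv.eval_eq_sum_of_apply_eq_zero hab hp]
  refine sum_eq_zero fun k hk => ?_
  have hk : k ≤ m := by rw [mem_range] at hk; omega
  rw [coeff_pderiv, add_right_comm, ← single_add, Nat.add_sub_cancel,
    show m - k = m + 1 - (k + 1) by omega, hc (k + 1) (by omega)]
  simp

theorem IsHomogeneous.eval_pderiv_right_eq_zero (hQ : Q.IsHomogeneous (m + 1)) (hab : a ≠ b)
    (hp : ∀ i, i ≠ a → i ≠ b → p i = 0)
    (hc : ∀ k ≤ m + 1, coeff (single a k + single b (m + 1 - k)) Q = 0) :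
    eval p (pderiv b Q) = 0 := by
  rw [hQ.pderiv.eval_eq_sum_of_apply_eq_zero hab hp]
  refine sum_eq_zero fun k hk => ?_
  have hk : k ≤ m := by rw [mem_range] at hk; omega
  rw [coeff_pderiv, add_assoc, ← single_add, Nat.add_sub_cancel,
    show m - k + 1 = m + 1 - k by omega, hc k (by omega)]
  simp

theorem IsHomogeneous.eval_pderiv_of_ne (hQ : Q.IsHomogeneous 3) (hab : a ≠ b)
    (hp : ∀ i, i ≠ a → i ≠ b → p i = 0) {j : σ} (hja : j ≠ a) (hjb : j ≠ b) :
    eval p (pderiv j Q) =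
      coeff (single a 2 + single j 1) Q * p a ^ 2 +
        coeff (single a 1 + single b 1 + single j 1) Q * p a * p b +
          coeff (single b 2 + single j 1) Q * p b ^ 2 := by
  rw [hQ.pderiv.eval_eq_sum_of_apply_eq_zero hab hp]
  simp [sum_range_succ, coeff_pderiv, hja.symm, hjb.symm, -single_tsub]
  ring

theorem IsHomogeneous.coeff_single_add_single_eq_zero [DecidableEq σ] (hQ : Q.IsHomogeneous 3)
    (hab : a ≠ b) (h0 : eval (fun i => if i = a then 1 else 0) Q = 0)
    (ha1 : coeff (single a 2 + single b 1) Q = 0) (ha2 : coeff (single a 1 + single b 2) Q = 0)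
    (ha3 : coeff (single b 3) Q = 0) :
    ∀ k ≤ 3, coeff (single a k + single b (3 - k)) Q = 0 := by
  intro k hk
  interval_cases k
  · simpa using ha3
  · exact ha2
  · exact ha1
  · rw [hQ.eval_eq_sum_of_apply_eq_zero hab fun i hia _ => if_neg hia] at h0
    simpa [sum_range_succ, hab.symm] using h0

end MvPolynomial

theorem stmt7_general {K : Type*} [Field K] (n : ℕ) (hn : 2 ≤ n)
    (F : MvPolynomial (Fin (n + 1)) K) (hF : F.IsHomogeneous 3)
    (ha3 : F.coeff (Finsupp.single 1 3) = 0)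
    (h0 : MvPolynomial.eval (fun i : Fin (n + 1) => if i = 0 then (1 : K) else 0) F = 0)
    (ha1 : F.coeff (Finsupp.single 0 2 + Finsupp.single 1 1) = 0)
    (ha2 : F.coeff (Finsupp.single 0 1 + Finsupp.single 1 2) = 0)
    (α β : K)
    (hαβ : ∀ j : Fin (n + 1), 2 ≤ (j : ℕ) →
      F.coeff (Finsupp.single 1 2 + Finsupp.single j 1) =
          α * F.coeff (Finsupp.single 0 2 + Finsupp.single j 1) +
            β * F.coeff (Finsupp.single 0 1 + Finsupp.single 1 1 + Finsupp.single j 1) ∧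
        F.coeff (Finsupp.single 0 1 + Finsupp.single 1 1 + Finsupp.single j 1) =
          β * F.coeff (Finsupp.single 0 2 + Finsupp.single j 1))
    (s : AlgebraicClosure K)
    (hs : s ^ 2 + algebraMap K (AlgebraicClosure K) β * s +
      algebraMap K (AlgebraicClosure K) (α + β ^ 2) = 0) :
    (MvPolynomial.eval
        (fun i : Fin (n + 1) => if i = 0 then s else if i = 1 then 1 else 0)
        (MvPolynomial.map (algebraMap K (AlgebraicClosure K)) F) = 0 ∧
      ∀ j : Fin (n + 1),
        MvPolynomial.eval
          (fun i : Fin (n + 1) => if i = 0 then s else if i = 1 then 1 else 0)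
          (MvPolynomial.pderiv j
            (MvPolynomial.map (algebraMap K (AlgebraicClosure K)) F)) = 0) ∧
    ∃ z : Fin (n + 1) → AlgebraicClosure K, z ≠ 0 ∧
      MvPolynomial.eval z (MvPolynomial.map (algebraMap K (AlgebraicClosure K)) F) = 0 ∧
      ∀ j : Fin (n + 1),
        MvPolynomial.eval z
          (MvPolynomial.pderiv j
            (MvPolynomial.map (algebraMap K (AlgebraicClosure K)) F)) = 0 := by
  set φ := algebraMap K (AlgebraicClosure K)
  set p : Fin (n + 1) → AlgebraicClosure K := fun i => if i = 0 then s else if i = 1 then 1 else 0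
  have hval1 : ((1 : Fin (n + 1)) : ℕ) = 1 := by rw [Fin.val_one', Nat.one_mod_eq_one]; omega
  have h01 : (0 : Fin (n + 1)) ≠ 1 := by rw [Ne, Fin.ext_iff, Fin.val_zero, hval1]; omega
  have hp : ∀ i, i ≠ 0 → i ≠ 1 → p i = 0 := fun i hi0 hi1 => by simp [p, hi0, hi1]
  have hG : (map φ F).IsHomogeneous (2 + 1) := hF.map φ
  have hc (k : ℕ) (hk : k ≤ 2 + 1) :
      coeff (Finsupp.single 0 k + Finsupp.single 1 (2 + 1 - k)) (map φ F) = 0 := by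
    rw [coeff_map, hF.coeff_single_add_single_eq_zero h01 h0 ha1 ha2 ha3 k hk, map_zero]
  have hev : eval p (map φ F) = 0 := by
    rw [hG.eval_eq_sum_of_apply_eq_zero h01 hp]
    exact Finset.sum_eq_zero fun k hk => by
      rw [hc k (Nat.lt_succ_iff.mp (Finset.mem_range.mp hk)), zero_mul, zero_mul]
  have hpd (j : Fin (n + 1)) : eval p (pderiv j (map φ F)) = 0 := by
    rcases eq_or_ne j 0 with rfl | hj0
    · exact hG.eval_pderiv_left_eq_zero h01 hp hc
    rcases eq_or_ne j 1 with rfl | hj1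
    · exact hG.eval_pderiv_right_eq_zero h01 hp hc
    have hj : 2 ≤ (j : ℕ) := by
      rw [Ne, Fin.ext_iff, Fin.val_zero] at hj0
      rw [Ne, Fin.ext_iff, hval1] at hj1
      omega
    obtain ⟨hA, hB⟩ := hαβ j hj
    rw [(hF.map φ).eval_pderiv_of_ne h01 hp hj0 hj1]
    simp only [coeff_map, hA, hB, p, if_pos, h01.symm, if_false, map_add, map_mul, map_pow] at hs ⊢
    linear_combination φ (F.coeff (Finsupp.single 0 2 + Finsupp.single j 1)) * hs
  exact ⟨⟨hev, hpd⟩, p, fun h => by simpa [p, h01.symm] using congrFun h 1, hev, hpd⟩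

/-- Let `K` be a field of characteristic `≠ 3`, `n ≥ 2`, and `F` a cubic form
in `K[x₀,…,xₙ]` such that: the coefficient `a₃` of `x₁³` vanishes, `F(1,0,…,0) = 0`, the
coefficients of `x₀²x₁` and `x₀x₁²` vanish, and there are `α, β ∈ K` with
`a_{2,j} = α·a_{0,j} + β·a_{1,j}` and `a_{1,j} = β·a_{0,j}` for all `2 ≤ j ≤ n`, where
`a_{k,j}` is the coefficient of `x₀^{2-k}x₁^k x_j`.  If `s ∈ K̄` satisfies
`s² + βs + (α + β²) = 0`, then `F(s,1,0,…,0) = 0` and `∂F/∂x_j(s,1,0,…,0) = 0` for all `j`;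
in particular the cubic hypersurface `{F = 0}` has a singular point over `K̄`. -/
theorem stmt7 {K : Type*} [Field K] (h3 : (3 : K) ≠ 0) (n : ℕ) (hn : 2 ≤ n)
    (F : MvPolynomial (Fin (n + 1)) K) (hF : F.IsHomogeneous 3)
    (ha3 : F.coeff (Finsupp.single 1 3) = 0)
    (h0 : MvPolynomial.eval (fun i : Fin (n + 1) => if i = 0 then (1 : K) else 0) F = 0)
    (ha1 : F.coeff (Finsupp.single 0 2 + Finsupp.single 1 1) = 0)
    (ha2 : F.coeff (Finsupp.single 0 1 + Finsupp.single 1 2) = 0)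
    (α β : K)
    (hαβ : ∀ j : Fin (n + 1), 2 ≤ (j : ℕ) →
      F.coeff (Finsupp.single 1 2 + Finsupp.single j 1) =
          α * F.coeff (Finsupp.single 0 2 + Finsupp.single j 1) +
            β * F.coeff (Finsupp.single 0 1 + Finsupp.single 1 1 + Finsupp.single j 1) ∧
        F.coeff (Finsupp.single 0 1 + Finsupp.single 1 1 + Finsupp.single j 1) =
          β * F.coeff (Finsupp.single 0 2 + Finsupp.single j 1))
    (s : AlgebraicClosure K)
    (hs : s ^ 2 + algebraMap K (AlgebraicClosure K) β * s +
      algebraMap K (AlgebraicClosure K) (α + β ^ 2) = 0) :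
    (MvPolynomial.eval
        (fun i : Fin (n + 1) => if i = 0 then s else if i = 1 then 1 else 0)
        (MvPolynomial.map (algebraMap K (AlgebraicClosure K)) F) = 0 ∧
      ∀ j : Fin (n + 1),
        MvPolynomial.eval
          (fun i : Fin (n + 1) => if i = 0 then s else if i = 1 then 1 else 0)
          (MvPolynomial.pderiv j
            (MvPolynomial.map (algebraMap K (AlgebraicClosure K)) F)) = 0) ∧
    ∃ z : Fin (n + 1) → AlgebraicClosure K, z ≠ 0 ∧
      MvPolynomial.eval z (MvPolynomial.map (algebraMap K (AlgebraicClosure K)) F) = 0 ∧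
      ∀ j : Fin (n + 1),
        MvPolynomial.eval z
          (MvPolynomial.pderiv j
            (MvPolynomial.map (algebraMap K (AlgebraicClosure K)) F)) = 0 :=
  stmt7_general n hn F hF ha3 h0 ha1 ha2 α β hαβ s hs
end

section
/- Let K be a field and F ∈ K[x₀,…,xₙ] homogeneous of degree d with expansion F(1, t+ξ₁, ζ₂t+ξ₂, …, ζₙt+ξₙ) = Σ_k f_k(ξ,ζ) t^k. Then the Jacobian matrix of (f₀,…,f_{m-1}) with respect to (ξ₁,…,ξₙ,ζ₂,…,ζₙ) evaluated at (ξ,ζ) = 0 equals the m × (2n-1) matrix whose entry in row k (0 ≤ k ≤ m-1) and the ξ₁-column is (k+1)·a_{k+1}, in the ξ_j-column (2 ≤ j ≤ n) is a_{k,j}, and in the ζ_j-column (2 ≤ j ≤ n) is a_{k-1,j} (with a_{-1,j} = 0), where a_k is the coefficient of x₀^{d-k}x₁^k in F and a_{k,j} is the coefficient of x₀^{d-k-1}x₁^k x_j in F. -/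
open MvPolynomial

/-!
Write `φ` for the substitution `x₀ ↦ 1, x₁ ↦ t + ξ₁, xⱼ ↦ ζⱼ t + ξⱼ`, so that `Σ f_k t^k = F(φ)`.
Differentiating `F(φ)` coefficientwise in `t` with respect to a variable `v` and setting
`ξ = ζ = 0` gives, by the chain rule, `Σᵢ (∂ᵢF)(1, t, 0, …, 0) · ∂φᵢ/∂v |₀`, and `∂φᵢ/∂v |₀` is
`1` for `v = ξⱼ, i = j`, is `t` for `v = ζⱼ, i = j`, and vanishes otherwise.  For `G` homogeneous
of degree `e` the coefficient of `t^k` in `G(1, t, 0, …, 0)` is the coefficient of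
`x₀^(e-k) x₁^k` in `G`; applied to `G = ∂ᵢF` this is a coefficient of `F` up to the factor
coming from the exponent of `xᵢ`, which is `k + 1` for `i = 1` and `1` for `i ≥ 2`.
-/

/-- The expansion of `F(1, t+ξ₁, ζ₂t+ξ₂, …, ζₙt+ξₙ) = Σ_k f_k(ξ,ζ) t^k` as a polynomial in `t`
with coefficients `f_k` in the polynomial ring `K[ξ₁,…,ξₙ,ζ₂,…,ζₙ]`; the `ξ` variables are
indexed by `Sum.inl (j-1)`, `j = 1,…,n`, and the `ζ` variables by `Sum.inr (j-2)`,
`j = 2,…,n`. -/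
noncomputable def lineExpansion {K : Type*} [Field K] (n : ℕ)
    (F : MvPolynomial (Fin (n + 1)) K) :
    Polynomial (MvPolynomial (Fin n ⊕ Fin (n - 1)) K) :=
  MvPolynomial.aeval
    (fun i : Fin (n + 1) =>
      if h0 : (i : ℕ) = 0 then 1
      else if h1 : (i : ℕ) = 1 then
        Polynomial.X +
          Polynomial.C (MvPolynomial.X (Sum.inl ⟨0, by have := i.isLt; omega⟩))
      else
        Polynomial.C (MvPolynomial.X (Sum.inr ⟨(i : ℕ) - 2, by have := i.isLt; omega⟩)) *
            Polynomial.X +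
          Polynomial.C (MvPolynomial.X (Sum.inl ⟨(i : ℕ) - 1, by have := i.isLt; omega⟩))) F

open scoped Polynomial

namespace Finsupp

lemma eq_single_add_single_of_forall_ne {σ : Type*} {a b : σ} (hab : a ≠ b) {μ : σ →₀ ℕ}
    (h : ∀ i, i ≠ a → i ≠ b → μ i = 0) :
    μ = single a (μ a) + single b (μ b) := by
  ext i
  by_cases hia : i = a
  · subst hia; simp [hab]
  by_cases hib : i = b
  · subst hib; simp [Ne.symm hab]
  simp [Ne.symm hia, Ne.symm hib, h i hia hib]

lemma single_zero_add_single_one_apply_of_two_le {n : ℕ} {i : Fin (n + 1)}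
    (hi : 2 ≤ (i : ℕ)) (a b : ℕ) :
    (single 0 a + single 1 b : Fin (n + 1) →₀ ℕ) i = 0 := by
  have h1 : ((1 : Fin (n + 1)) : ℕ) ≤ 1 := by rw [Fin.val_one']; exact Nat.mod_le 1 (n + 1)
  have hi0 : i ≠ 0 := fun h => by rw [h] at hi; simp at hi
  have hi1 : i ≠ 1 := fun h => by rw [h] at hi; omega
  rw [add_apply, single_eq_of_ne hi0, single_eq_of_ne hi1, add_zero]

end Finsupp

lemma Fintype.prod_pow_eq_pow_of_eq_one {σ M : Type*} [Fintype σ] [CommMonoid M] {a b : σ}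
    {ψ : σ → M} (ha : ψ a = 1) {μ : σ →₀ ℕ} (h : ∀ i, i ≠ a → i ≠ b → μ i = 0) :
    ∏ i, ψ i ^ μ i = ψ b ^ μ b := by
  refine Finset.prod_eq_single b (fun i _ hib => ?_) (absurd (Finset.mem_univ b))
  by_cases hia : i = a
  · simp [hia, ha]
  · simp [h i hia hib]

namespace Derivation

variable {R A : Type*} [CommRing R] [CommRing A] [Algebra R A]

noncomputable def coeffwise (d : Derivation R A A) : Derivation R A[X] A[X] :=
  (PolynomialModule.equivPolynomialSelf : PolynomialModule A A ≃ₗ[A[X]] A[X]).toLinearMap.compDer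
    d.mapCoeffs

@[simp]
lemma coeff_coeffwise (d : Derivation R A A) (p : A[X]) (k : ℕ) :
    (d.coeffwise p).coeff k = d (p.coeff k) := rfl

@[simp]
lemma coeffwise_X (d : Derivation R A A) : d.coeffwise Polynomial.X = 0 := by
  ext k; simp [Polynomial.coeff_X, apply_ite d]

@[simp]
lemma coeffwise_C (d : Derivation R A A) (a : A) :
    d.coeffwise (Polynomial.C a) = Polynomial.C (d a) := by
  ext k; simp [Polynomial.coeff_C, apply_ite d]

end Derivation

namespace MvPolynomial

theorem derivation_aeval {R B M τ : Type*} [CommSemiring R] [CommSemiring B] [Algebra R B]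
    [AddCommMonoid M] [Module R M] [Module B M] [Fintype τ] (D : Derivation R B M) (φ : τ → B)
    (F : MvPolynomial τ R) :
    D (aeval φ F) = ∑ i, aeval φ (pderiv i F) • D (φ i) := by
  classical
  induction F using MvPolynomial.induction_on with
  | C a => simp
  | add p q hp hq => simp [hp, hq, add_smul, Finset.sum_add_distrib]
  | mul_X p i hp =>
    simp [Derivation.leibniz, hp, pderiv_X, Pi.single_apply, add_smul, mul_smul,
      Finset.sum_add_distrib, Finset.smul_sum, apply_ite]

theorem map_coeffwise_aeval {R A B τ : Type*} [CommRing R] [CommRing A] [Algebra R A]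
    [CommRing B] [Algebra R B] [Fintype τ]
    (f : A →ₐ[R] B) (d : Derivation R A A) (φ : τ → A[X]) (F : MvPolynomial τ R) :
    (d.coeffwise (aeval φ F)).map (f : A →+* B) =
      ∑ i, aeval (fun j => (φ j).map (f : A →+* B)) (pderiv i F) *
        (d.coeffwise (φ i)).map (f : A →+* B) := by
  rw [derivation_aeval, Polynomial.map_sum]
  refine Finset.sum_congr rfl fun i _ => ?_
  rw [smul_eq_mul, Polynomial.map_mul, ← Polynomial.coe_mapAlgHom, comp_aeval_apply]

variable {R σ : Type*} [CommSemiring R] [Fintype σ] {a b : σ} {ψ : σ → R[X]}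

lemma coeff_prod_pow_of_weight_eq [DecidableEq σ] (hab : a ≠ b) (ha : ψ a = 1)
    (hb : ψ b = Polynomial.X) (hψ : ∀ i, i ≠ a → i ≠ b → ψ i = 0) {e : ℕ} {μ : σ →₀ ℕ}
    (hμ : Finsupp.weight 1 μ = e) (k : ℕ) :
    (∏ i, ψ i ^ μ i).coeff k =
      if μ = Finsupp.single a (e - k) + Finsupp.single b k then 1 else 0 := by
  by_cases h : ∀ i, i ≠ a → i ≠ b → μ i = 0
  · rw [Finsupp.eq_single_add_single_of_forall_ne hab h] at hμ
    simp only [map_add, Finsupp.weight_single, Pi.one_apply, smul_eq_mul, mul_one] at hμ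
    rw [Fintype.prod_pow_eq_pow_of_eq_one ha h, hb, Polynomial.coeff_X_pow]
    by_cases hk : k = μ b
    · rw [if_pos hk, if_pos]
      rw [Finsupp.eq_single_add_single_of_forall_ne hab h, ← hk]
      congr 2; omega
    · rw [if_neg hk, if_neg]
      rintro rfl
      simp [Ne.symm hab] at hk
  · push Not at h
    obtain ⟨i, hia, hib, hi⟩ := h
    rw [Finset.prod_eq_zero (Finset.mem_univ i) (by simp [hψ i hia hib, hi]), if_neg]
    · simp
    rintro rfl
    simp [Ne.symm hia, Ne.symm hib] at hi

lemma IsHomogeneous.coeff_aeval_one_X_zero (hab : a ≠ b) (ha : ψ a = 1)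
    (hb : ψ b = Polynomial.X) (hψ : ∀ i, i ≠ a → i ≠ b → ψ i = 0) {G : MvPolynomial σ R}
    {e : ℕ} (hG : G.IsHomogeneous e) (k : ℕ) :
    (MvPolynomial.aeval ψ G).coeff k =
      G.coeff (Finsupp.single a (e - k) + Finsupp.single b k) := by
  classical
  rw [aeval_def, eval₂_eq', Polynomial.finsetSum_coeff]
  simp only [Polynomial.algebraMap_eq, Polynomial.coeff_C_mul]
  rw [Finset.sum_congr rfl fun μ hμ => by
    rw [coeff_prod_pow_of_weight_eq hab ha hb hψ (hG (mem_support_iff.mp hμ))]]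
  simp only [mul_ite, mul_one, mul_zero, Finset.sum_ite_eq', mem_support_iff, ne_eq, ite_not]
  exact ite_eq_right_iff.mpr Eq.symm

end MvPolynomial

section LineExpansion

variable {K : Type*} [Field K] {n : ℕ}

variable (K n) in
noncomputable def lineSubst : Fin (n + 1) → Polynomial (MvPolynomial (Fin n ⊕ Fin (n - 1)) K) :=
  fun i =>
    if h0 : (i : ℕ) = 0 then 1
    else if h1 : (i : ℕ) = 1 then
      Polynomial.X + Polynomial.C (X (Sum.inl ⟨0, by have := i.isLt; omega⟩))
    else
      Polynomial.C (X (Sum.inr ⟨(i : ℕ) - 2, by have := i.isLt; omega⟩)) * Polynomial.X +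
        Polynomial.C (X (Sum.inl ⟨(i : ℕ) - 1, by have := i.isLt; omega⟩))

lemma lineExpansion_eq_aeval (F : MvPolynomial (Fin (n + 1)) K) :
    lineExpansion n F = aeval (lineSubst K n) F := rfl

lemma map_eval_zero_lineSubst (i : Fin (n + 1)) :
    (lineSubst K n i).map (eval 0) =
      if (i : ℕ) = 0 then 1 else if (i : ℕ) = 1 then Polynomial.X else 0 := by
  unfold lineSubst
  split_ifs <;> simp

lemma map_eval_zero_coeffwise_pderiv_inl_lineSubst (j : Fin n) (i : Fin (n + 1)) :
    ((pderiv (Sum.inl j)).coeffwise (lineSubst K n i)).map (eval 0) =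
      if (i : ℕ) = j + 1 then 1 else 0 := by
  unfold lineSubst
  split_ifs <;>
    simp [pderiv_X, Pi.single_apply, Fin.ext_iff, apply_ite (Polynomial.map _)] <;> omega

lemma map_eval_zero_coeffwise_pderiv_inr_lineSubst (j : Fin (n - 1)) (i : Fin (n + 1)) :
    ((pderiv (Sum.inr j)).coeffwise (lineSubst K n i)).map (eval 0) =
      if (i : ℕ) = j + 2 then Polynomial.X else 0 := by
  unfold lineSubst
  split_ifs <;>
    simp [pderiv_X, Pi.single_apply, Fin.ext_iff, apply_ite (Polynomial.map _)] <;> omega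

lemma eval_zero_pderiv_coeff_lineExpansion (F : MvPolynomial (Fin (n + 1)) K)
    (v : Fin n ⊕ Fin (n - 1)) (k : ℕ) :
    eval 0 (pderiv v ((lineExpansion n F).coeff k)) =
      (∑ i, aeval (fun j => (lineSubst K n j).map (eval 0)) (pderiv i F) *
        ((pderiv v).coeffwise (lineSubst K n i)).map (eval 0)).coeff k := by
  have := congrArg (Polynomial.coeff · k)
    (map_coeffwise_aeval (aeval (0 : Fin n ⊕ Fin (n - 1) → K)) (pderiv v) (lineSubst K n) F)
  simpa [Polynomial.coeff_map, lineExpansion_eq_aeval] using this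

lemma coeff_aeval_map_eval_zero_lineSubst (hn : 1 ≤ n) {G : MvPolynomial (Fin (n + 1)) K}
    {e : ℕ} (hG : G.IsHomogeneous e) (k : ℕ) :
    (aeval (fun j => (lineSubst K n j).map (eval 0)) G).coeff k =
      G.coeff (Finsupp.single 0 (e - k) + Finsupp.single 1 k) := by
  have h1 : ((1 : Fin (n + 1)) : ℕ) = 1 := by rw [Fin.val_one', Nat.mod_eq_of_lt (by omega)]
  refine hG.coeff_aeval_one_X_zero (fun h => by simp [Fin.ext_iff] at h; omega) ?_ ?_
    (fun i hi0 hi1 => ?_) k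
  · rw [map_eval_zero_lineSubst]; exact if_pos rfl
  · rw [map_eval_zero_lineSubst, if_neg (by omega), if_pos h1]
  · rw [map_eval_zero_lineSubst, if_neg fun h : (i : ℕ) = 0 => hi0 (Fin.ext h),
      if_neg fun h => hi1 (Fin.ext (h.trans h1.symm))]

lemma eval_zero_pderiv_inl_coeff_lineExpansion {F : MvPolynomial (Fin (n + 1)) K} {d : ℕ}
    (hF : F.IsHomogeneous d) (j : Fin n) (k : ℕ) :
    eval 0 (pderiv (Sum.inl j) ((lineExpansion n F).coeff k)) =
      (pderiv j.succ F).coeff (Finsupp.single 0 (d - 1 - k) + Finsupp.single 1 k) := by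
  have hj : ∀ i : Fin (n + 1), (i : ℕ) = j + 1 ↔ i = j.succ := fun i => by simp [Fin.ext_iff]
  simp only [eval_zero_pderiv_coeff_lineExpansion, map_eval_zero_coeffwise_pderiv_inl_lineSubst,
    hj, mul_ite, mul_one, mul_zero, Finset.sum_ite_eq', Finset.mem_univ, if_true]
  exact coeff_aeval_map_eval_zero_lineSubst j.pos hF.pderiv k

lemma eval_zero_pderiv_inr_coeff_lineExpansion {F : MvPolynomial (Fin (n + 1)) K} {d : ℕ}
    (hF : F.IsHomogeneous d) (j : Fin (n - 1)) (k : ℕ) :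
    eval 0 (pderiv (Sum.inr j) ((lineExpansion n F).coeff k)) =
      if k = 0 then 0 else
        (pderiv ⟨j + 2, by have := j.isLt; omega⟩ F).coeff
          (Finsupp.single 0 (d - k) + Finsupp.single 1 (k - 1)) := by
  have hj : ∀ i : Fin (n + 1), (i : ℕ) = j + 2 ↔ i = ⟨j + 2, by have := j.isLt; omega⟩ :=
    fun i => by simp [Fin.ext_iff]
  simp only [eval_zero_pderiv_coeff_lineExpansion, map_eval_zero_coeffwise_pderiv_inr_lineSubst,
    hj, mul_ite, mul_zero, Finset.sum_ite_eq', Finset.mem_univ, if_true]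
  rcases k with _ | k
  · simp
  · rw [Polynomial.coeff_mul_X,
      coeff_aeval_map_eval_zero_lineSubst (by have := j.isLt; omega) hF.pderiv]
    simp only [Nat.add_one_ne_zero, if_false, Nat.add_sub_cancel]
    congr 3
    omega

end LineExpansion

/-- Let `F ∈ K[x₀,…,xₙ]` be homogeneous of degree `d` with expansion
`F(1, t+ξ₁, ζ₂t+ξ₂, …, ζₙt+ξₙ) = Σ_k f_k(ξ,ζ) t^k`.  The Jacobian matrix of
`(f₀,…,f_{m-1})` in the variables `(ξ₁,…,ξₙ,ζ₂,…,ζₙ)` evaluated at `(ξ,ζ) = 0` is the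
`m × (2n-1)` matrix whose entry in row `k` and the `ξ₁`-column is `(k+1)·a_{k+1}`, in the
`ξ_j`-column (`2 ≤ j ≤ n`) is `a_{k,j}`, and in the `ζ_j`-column (`2 ≤ j ≤ n`) is `a_{k-1,j}`
(with `a_{-1,j} = 0`), where `a_k` is the coefficient of `x₀^{d-k}x₁^k` and `a_{k,j}` that of
`x₀^{d-k-1}x₁^k x_j` in `F`. -/
theorem stmt9 {K : Type*} [Field K] (n d m : ℕ) (hn : 1 ≤ n)
    (F : MvPolynomial (Fin (n + 1)) K) (hF : F.IsHomogeneous d) :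
    ∀ k < m,
      (MvPolynomial.eval (0 : Fin n ⊕ Fin (n - 1) → K)
          (MvPolynomial.pderiv (Sum.inl ⟨0, by omega⟩) ((lineExpansion n F).coeff k)) =
        ((k + 1 : ℕ) : K) *
          F.coeff (Finsupp.single 0 (d - (k + 1)) + Finsupp.single 1 (k + 1))) ∧
      (∀ j : Fin n, 1 ≤ (j : ℕ) →
        MvPolynomial.eval (0 : Fin n ⊕ Fin (n - 1) → K)
            (MvPolynomial.pderiv (Sum.inl j) ((lineExpansion n F).coeff k)) =
          F.coeff (Finsupp.single 0 (d - k - 1) + Finsupp.single 1 k +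
            Finsupp.single ⟨(j : ℕ) + 1, by have := j.isLt; omega⟩ 1)) ∧
      (∀ j : Fin (n - 1),
        MvPolynomial.eval (0 : Fin n ⊕ Fin (n - 1) → K)
            (MvPolynomial.pderiv (Sum.inr j) ((lineExpansion n F).coeff k)) =
          if k = 0 then 0
          else
            F.coeff (Finsupp.single 0 (d - k) + Finsupp.single 1 (k - 1) +
              Finsupp.single ⟨(j : ℕ) + 2, by have := j.isLt; omega⟩ 1)) := by
  have h1 : (Fin.succ ⟨0, by omega⟩ : Fin (n + 1)) = 1 := by
    rw [Fin.ext_iff, Fin.val_one', Nat.mod_eq_of_lt (by omega)]; rfl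
  have h01 : (0 : Fin (n + 1)) ≠ 1 := h1 ▸ (Fin.succ_ne_zero _).symm
  intro k _
  refine ⟨?_, fun j hj => ?_, fun j => ?_⟩
  · rw [eval_zero_pderiv_inl_coeff_lineExpansion hF, coeff_pderiv, h1, add_assoc,
      ← Finsupp.single_add, Finsupp.add_apply, Finsupp.single_eq_of_ne h01.symm,
      Finsupp.single_eq_same, zero_add, Nat.sub_sub, Nat.add_comm 1 k, mul_comm, Nat.cast_succ]
  · rw [eval_zero_pderiv_inl_coeff_lineExpansion hF, coeff_pderiv,
      Finsupp.single_zero_add_single_one_apply_of_two_le (by rw [Fin.val_succ]; omega),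
      Nat.cast_zero, zero_add, mul_one, Nat.sub_right_comm]
    rfl
  · rw [eval_zero_pderiv_inr_coeff_lineExpansion hF]
    split_ifs
    · rfl
    · rw [coeff_pderiv, Finsupp.single_zero_add_single_one_apply_of_two_le (by simp),
        Nat.cast_zero, zero_add, mul_one]
end
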